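/- arXiv:1907.07053 — 3 statements merged into one kernel-verified Lean document; each statement's English description precedes it below -/
import Mathlib

section
/- Let f̃ = f + φ where f : E → ℝ is convex, p-times continuously differentiable (p ≥ 2) with p-th derivative ν-Hölder continuous of constant H_{f,p}(ν), and φ is proper closed convex. Fix x ∈ dom φ and H ≥ max{p·H_{f,p}(ν), 3θ(p−1)!} with θ ≥ 0. Suppose x⁺ satisfies Φ_{x,p}(x⁺) + (H/p!)‖x⁺−x‖^{p+ν} + φ(x⁺) ≤ f̃(x) and ‖∇Ω(x⁺) + g_φ(x⁺)‖ ≤ θ‖x⁺−x‖^{p+ν−1} for some g_φ(x⁺) ∈ ∂φ(x⁺), where Ω(y) = Φ_{x,p}(y) + (H/p!)‖y−x‖^{p+ν}. Then f̃(x) − f̃(x⁺) ≥ (1/(8(p+1)!·H^{1/(p+ν−1)}))·‖∇f(x⁺) + g_φ(x⁺)‖^{(p+ν)/(p+ν−1)}. -/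
/-!
Write `r = ‖x⁺ - x‖` and `q = p + ν`. The `ν`-Hölder continuity of `D^p f` bounds the Taylor
remainders at `x` of `f` and of `Df` by `(H_f / p!) r^q` and `(H_f / (p-1)!) r^(q-1)`. With the
model inequality, the first gives the decrease `f̃(x) - f̃(x⁺) ≥ (H - H_f) / p! · r^q`. The
derivative of the Taylor polynomial of `f` is the Taylor polynomial of `Df` (this is where the
symmetry of iterated derivatives enters), so the second, together with the inexact stationarity of
the model, gives `‖∇f(x⁺) + g‖ ≤ 3 H r^(q-1)`. Eliminating `r` between the two bounds gives the
estimate.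
-/

open RealInnerProductSpace

/-- The `p`-th order Taylor polynomial of `f` at `x`, evaluated at `y`. -/
noncomputable def taylorPoly {E : Type*} [NormedAddCommGroup E] [NormedSpace ℝ E]
    (f : E → ℝ) (p : ℕ) (x y : E) : ℝ :=
  f x + ∑ i ∈ Finset.Icc 1 p, (1 / (i.factorial : ℝ)) * iteratedFDeriv ℝ i f x (fun _ => y - x)

section Symmetry

open Function

variable {E F : Type*} [NormedAddCommGroup E] [NormedSpace ℝ E]
  [NormedAddCommGroup F] [NormedSpace ℝ F] {f : E → F}

theorem iteratedFDeriv_cons_cons_comm {n : ℕ} (hf : ContDiff ℝ (n + 2) f) (x a b : E)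
    (w : Fin n → E) :
    iteratedFDeriv ℝ (n + 2) f x (Fin.cons a (Fin.cons b w)) =
      iteratedFDeriv ℝ (n + 2) f x (Fin.cons b (Fin.cons a w)) := by
  set g : E → F := fun z => iteratedFDeriv ℝ n f z w
  have hg : ContDiff ℝ 2 g := (ContinuousMultilinearMap.apply ℝ (fun _ => E) F w).contDiff.comp
    (hf.iteratedFDeriv_right (by rw [add_comm]))
  have hd : ∀ k ≤ n + 1, Differentiable ℝ (iteratedFDeriv ℝ k f) := fun k hk =>
    hf.differentiable_iteratedFDeriv (by norm_cast; omega)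
  have hcons : ∀ a b : E, iteratedFDeriv ℝ (n + 2) f x (Fin.cons a (Fin.cons b w)) =
      fderiv ℝ (fderiv ℝ g) x a b := by
    intro a b
    have hg' : ∀ y, iteratedFDeriv ℝ (n + 1) f y (Fin.cons b w) = fderiv ℝ g y b := fun y =>
      (hd n (by omega) y).iteratedFDeriv_succ_apply_left'
    rw [(hd (n + 1) le_rfl x).iteratedFDeriv_succ_apply_left']
    simp only [Fin.tail_cons, Fin.cons_zero, hg']
    rw [fderiv_clm_apply ((hg.fderiv_right (m := 1) le_rfl).differentiable one_ne_zero x)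
      (differentiableAt_const b)]
    simp
  rw [hcons, hcons, (hg.contDiffAt.isSymmSndFDerivAt (by simp)).eq]

theorem iteratedFDeriv_update_const_eq_cons {n : ℕ} (hf : ContDiff ℝ (n + 1) f) (x v h : E)
    (j : Fin (n + 1)) :
    iteratedFDeriv ℝ (n + 1) f x (update (fun _ => v) j h) =
      iteratedFDeriv ℝ (n + 1) f x (Fin.cons h fun _ => v) := by
  induction n generalizing x with
  | zero =>
    congr 1
    ext i
    fin_cases i; fin_cases j
    rfl
  | succ n ih =>
    have hd : DifferentiableAt ℝ (iteratedFDeriv ℝ (n + 1) f) x :=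
      hf.differentiable_iteratedFDeriv (by norm_cast; omega) x
    cases j using Fin.cases with
    | zero =>
      congr 1
      ext i
      cases i using Fin.cases <;> simp
    | succ j =>
      -- Slot `0` is a derivative of `D^(n+1) f`, so `ih` moves `h` from slot `j + 1` to slot `1`;
      -- then swap slots `0` and `1`.
      have hconst : ∀ m, (fun _ : Fin (m + 1) => v) = Fin.cons v fun _ => v := fun m => by
        ext i; cases i using Fin.cases <;> rfl
      have hcons := hd.iteratedFDeriv_succ_apply_left' (m := Fin.cons v (Fin.cons h fun _ => v))
      simp only [Fin.cons_zero, Fin.tail_cons] at hcons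
      rw [hconst, ← Fin.cons_update, hd.iteratedFDeriv_succ_apply_left']
      simp only [Fin.cons_zero, Fin.tail_cons, ih (hf.of_le (by norm_cast; omega))]
      rw [← hcons, iteratedFDeriv_cons_cons_comm (by exact_mod_cast hf), ← hconst]

theorem iteratedFDeriv_update_const_eq_fderiv {n : ℕ} (hf : ContDiff ℝ (n + 1) f)
    (x v h : E) (j : Fin (n + 1)) :
    iteratedFDeriv ℝ (n + 1) f x (update (fun _ => v) j h) =
      iteratedFDeriv ℝ n (fderiv ℝ f) x (fun _ => v) h := by
  rw [iteratedFDeriv_update_const_eq_cons hf, ← iteratedFDeriv_update_const_eq_cons hf x v h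
    (Fin.last n), iteratedFDeriv_succ_apply_right]
  congr 2
  · ext i; simp [Fin.init, (Fin.castSucc_lt_last i).ne]
  · simp

theorem norm_iteratedFDeriv_fderiv_sub (n : ℕ) (f : E → F) (u v : E) :
    ‖iteratedFDeriv ℝ n (fderiv ℝ f) u - iteratedFDeriv ℝ n (fderiv ℝ f) v‖ =
      ‖iteratedFDeriv ℝ (n + 1) f u - iteratedFDeriv ℝ (n + 1) f v‖ := by
  rw [iteratedFDeriv_succ_eq_comp_right, iteratedFDeriv_succ_eq_comp_right, comp_apply,
    comp_apply, ← LinearIsometryEquiv.map_sub, LinearIsometryEquiv.norm_map]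

end Symmetry

section TaylorSum

open Finset Nat

variable {E F : Type*} [NormedAddCommGroup E] [NormedSpace ℝ E]
  [NormedAddCommGroup F] [NormedSpace ℝ F] {f : E → F}

noncomputable def taylorSum (f : E → F) (n : ℕ) (x y : E) : F :=
  ∑ k ∈ range (n + 1), (k ! : ℝ)⁻¹ • iteratedFDeriv ℝ k f x fun _ => y - x

theorem taylorPoly_eq_taylorSum (f : E → ℝ) (p : ℕ) (x : E) :
    taylorPoly f p x = taylorSum f p x := by
  ext y
  rw [taylorPoly, taylorSum, range_eq_Ico, sum_eq_sum_Ico_succ_bot (by omega), zero_add,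
    Ico_add_one_right_eq_Icc]
  simp [div_eq_inv_mul]

theorem hasFDerivAt_iteratedFDeriv_apply_sub_const {n : ℕ} (hf : ContDiff ℝ (n + 1) f)
    (x y : E) :
    HasFDerivAt (fun z => iteratedFDeriv ℝ (n + 1) f x fun _ => z - x)
      ((n + 1 : ℝ) • iteratedFDeriv ℝ n (fderiv ℝ f) x fun _ => y - x) y := by
  classical
  refine (HasFDerivAt.multilinear_comp (iteratedFDeriv ℝ (n + 1) f x)
    fun _ => (hasFDerivAt_id y).sub_const x).congr_fderiv ?_
  ext h
  simp [iteratedFDeriv_update_const_eq_fderiv hf, ← Nat.cast_smul_eq_nsmul ℝ]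

theorem hasFDerivAt_taylorSum {n : ℕ} (hf : ContDiff ℝ (n + 1) f) (x y : E) :
    HasFDerivAt (taylorSum f (n + 1) x) (taylorSum (fderiv ℝ f) n x y) y := by
  have hterm : ∀ k ∈ range (n + 1), HasFDerivAt
      (fun z => ((k + 1)! : ℝ)⁻¹ • iteratedFDeriv ℝ (k + 1) f x fun _ => z - x)
      ((k ! : ℝ)⁻¹ • iteratedFDeriv ℝ k (fderiv ℝ f) x fun _ => y - x) y := by
    intro k hk
    have hk : ContDiff ℝ (k + 1) f := hf.of_le (by norm_cast; simp at hk; omega)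
    convert (hasFDerivAt_iteratedFDeriv_apply_sub_const hk x y).fun_const_smul
      ((k + 1)! : ℝ)⁻¹ using 1
    rw [smul_smul, factorial_succ]
    push_cast
    field_simp
  convert (HasFDerivAt.fun_sum hterm).const_add (iteratedFDeriv ℝ 0 f x fun _ => y - x) using 1
  · ext z
    rw [taylorSum, sum_range_succ']
    simp [add_comm]
  · rfl

theorem norm_sub_taylorSum_le [CompleteSpace F] {n : ℕ} {C ν : ℝ} (hf : ContDiff ℝ (n + 1) f)
    (hC : 0 ≤ C) (hν : 0 ≤ ν)
    (hHol : ∀ u v, ‖iteratedFDeriv ℝ (n + 1) f u - iteratedFDeriv ℝ (n + 1) f v‖ ≤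
      C * ‖u - v‖ ^ ν) (x y : E) :
    ‖f y - taylorSum f (n + 1) x y‖ ≤ C / (n + 1)! * ‖y - x‖ ^ ((n + 1 : ℕ) + ν) := by
  set h := y - x
  set D : ℝ → F := fun t => iteratedFDeriv ℝ (n + 1) f (x + t • h) fun _ => h
  have hD : Continuous D := by
    have := hf.continuous_iteratedFDeriv le_rfl
    fun_prop
  have hweight : ∫ t in (0 : ℝ)..1, (1 - t) ^ n = ((n : ℝ) + 1)⁻¹ := by
    simp [intervalIntegral.integral_comp_sub_left (fun t => t ^ n)]
  -- Taylor's formula with integral remainder of order `n`; as `∫ (1 - t) ^ n = 1 / (n + 1)`, the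
  -- top Taylor term is the same integral with `D^(n+1) f` frozen at `x`.
  have hremainder : f y - taylorSum f (n + 1) x y =
      (n ! : ℝ)⁻¹ • ∫ t in (0 : ℝ)..1, (1 - t) ^ n • (D t - D 0) := by
    have hTaylor := map_add_eq_sum_add_integral_iteratedFDeriv (n := n) (x := x) (y := h)
      fun t _ => hf.contDiffAt
    rw [add_sub_cancel] at hTaylor
    have hI : IntervalIntegrable (fun t : ℝ => (1 - t) ^ n • D t) MeasureTheory.volume 0 1 :=
      (by fun_prop : Continuous fun t : ℝ => (1 - t) ^ n • D t).intervalIntegrable 0 1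
    have hI₀ : IntervalIntegrable (fun t : ℝ => (1 - t) ^ n • D 0) MeasureTheory.volume 0 1 :=
      (by fun_prop : Continuous fun t : ℝ => (1 - t) ^ n • D 0).intervalIntegrable 0 1
    simp_rw [smul_sub]
    rw [intervalIntegral.integral_sub hI hI₀, intervalIntegral.integral_smul_const, hweight,
      hTaylor, taylorSum, sum_range_succ _ (n + 1), smul_sub, smul_smul, factorial_succ]
    simp [D, h]
  have hpointwise : ∀ t ∈ Set.Icc (0 : ℝ) 1, ‖(1 - t) ^ n • (D t - D 0)‖ ≤
      (1 - t) ^ n * (C * ‖h‖ ^ ((n + 1 : ℕ) + ν)) := by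
    rintro t ⟨ht0, ht1⟩
    have hshift : ‖(x + t • h) - x‖ ≤ ‖h‖ := by
      rw [add_sub_cancel_left, norm_smul, Real.norm_of_nonneg ht0]
      exact mul_le_of_le_one_left (norm_nonneg h) ht1
    have hdiff : ‖D t - D 0‖ ≤ C * ‖h‖ ^ ((n + 1 : ℕ) + ν) := calc
      ‖D t - D 0‖ = ‖(iteratedFDeriv ℝ (n + 1) f (x + t • h) -
          iteratedFDeriv ℝ (n + 1) f x) fun _ => h‖ := by simp [D]
      _ ≤ ‖iteratedFDeriv ℝ (n + 1) f (x + t • h) - iteratedFDeriv ℝ (n + 1) f x‖ *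
          ‖h‖ ^ (n + 1) :=
        ContinuousMultilinearMap.le_opNorm_mul_pow_of_le _ (pi_norm_const_le h)
      _ ≤ C * ‖h‖ ^ ν * ‖h‖ ^ (n + 1) := by
        gcongr
        exact (hHol _ _).trans (by gcongr)
      _ = C * ‖h‖ ^ ((n + 1 : ℕ) + ν) := by
        rw [Real.rpow_add' (norm_nonneg h) (by positivity), Real.rpow_natCast]
        ring
    rw [norm_smul, Real.norm_of_nonneg (by bound)]
    gcongr
  calc ‖f y - taylorSum f (n + 1) x y‖
      ≤ (n ! : ℝ)⁻¹ * ∫ t in (0 : ℝ)..1, (1 - t) ^ n * (C * ‖h‖ ^ ((n + 1 : ℕ) + ν)) := by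
        rw [hremainder, norm_smul, Real.norm_of_nonneg (by positivity)]
        gcongr
        refine intervalIntegral.norm_integral_le_of_norm_le zero_le_one
          (MeasureTheory.ae_of_all _ fun t ht => hpointwise t (Set.Ioc_subset_Icc_self ht)) ?_
        exact (by fun_prop : Continuous fun t : ℝ => (1 - t) ^ n * _).intervalIntegrable 0 1
    _ = C / (n + 1)! * ‖y - x‖ ^ ((n + 1 : ℕ) + ν) := by
        rw [intervalIntegral.integral_mul_const, hweight, factorial_succ]
        push_cast
        field_simp
        rfl

theorem norm_fderiv_sub_fderiv_taylorPoly_le {f : E → ℝ} {n : ℕ} {C ν : ℝ}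
    (hf : ContDiff ℝ (n + 1 + 1) f) (hC : 0 ≤ C) (hν : 0 ≤ ν)
    (hHol : ∀ u v, ‖iteratedFDeriv ℝ (n + 1 + 1) f u - iteratedFDeriv ℝ (n + 1 + 1) f v‖ ≤
      C * ‖u - v‖ ^ ν) (x y : E) :
    ‖fderiv ℝ f y - fderiv ℝ (taylorPoly f (n + 1 + 1) x) y‖ ≤
      C / (n + 1)! * ‖y - x‖ ^ ((n + 1 + 1 : ℕ) + ν - 1) := by
  rw [taylorPoly_eq_taylorSum, (hasFDerivAt_taylorSum hf x y).fderiv]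
  convert norm_sub_taylorSum_le (hf.fderiv_right le_rfl) hC hν
    (fun u v => (norm_iteratedFDeriv_fderiv_sub _ f u v).trans_le (hHol u v)) x y using 3
  push_cast
  ring

theorem sub_div_factorial_mul_rpow_le_of_model_le {f ψ : E → ℝ} {n : ℕ} {C H ν : ℝ}
    (hf : ContDiff ℝ (n + 1) f) (hC : 0 ≤ C) (hν : 0 ≤ ν)
    (hHol : ∀ u v, ‖iteratedFDeriv ℝ (n + 1) f u - iteratedFDeriv ℝ (n + 1) f v‖ ≤
      C * ‖u - v‖ ^ ν) {x y : E}
    (hmodel : taylorPoly f (n + 1) x y + H / (n + 1)! * ‖y - x‖ ^ ((n + 1 : ℕ) + ν) + ψ y ≤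
      f x + ψ x) :
    (H - C) / (n + 1)! * ‖y - x‖ ^ ((n + 1 : ℕ) + ν) ≤ (f x + ψ x) - (f y + ψ y) := by
  have htaylor := (le_abs_self _).trans (norm_sub_taylorSum_le hf hC hν hHol x y)
  rw [← taylorPoly_eq_taylorSum] at htaylor
  rw [sub_div, sub_mul]
  linarith

end TaylorSum

section Gradient

variable {E : Type*} [NormedAddCommGroup E] [InnerProductSpace ℝ E]

theorem norm_gradient_add_le [CompleteSpace E] {f Φ R : E → ℝ} {y g : E}
    (hΦ : DifferentiableAt ℝ Φ y) (hR : DifferentiableAt ℝ R y) :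
    ‖gradient f y + g‖ ≤
      ‖fderiv ℝ f y - fderiv ℝ Φ y‖ + ‖fderiv ℝ R y‖ + ‖gradient (fun z => Φ z + R z) y + g‖ := by
  set T := (InnerProductSpace.toDual ℝ E).symm
  have hsplit : gradient f y + g = T (fderiv ℝ f y - fderiv ℝ Φ y) - T (fderiv ℝ R y) +
      (gradient (fun z => Φ z + R z) y + g) := by
    simp only [gradient, fderiv_fun_add hΦ hR, map_sub, map_add, T]
    abel
  rw [hsplit]
  refine (norm_add_le _ _).trans ?_
  gcongr
  exact (norm_sub_le _ _).trans_eq (by simp only [T, LinearIsometryEquiv.norm_map])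

theorem norm_fderiv_mul_norm_sub_rpow_le {c q : ℝ} (hc : 0 ≤ c) (hq : 1 < q) (x y : E) :
    ‖fderiv ℝ (fun z => c * ‖z - x‖ ^ q) y‖ ≤ c * q * ‖y - x‖ ^ (q - 1) := by
  have hsub : Differentiable ℝ fun z : E => z - x := by fun_prop
  have hd : DifferentiableAt ℝ (fun z => ‖z - x‖ ^ q) y :=
    (differentiable_norm_rpow hq).comp hsub y
  rw [fderiv_const_mul hd, norm_smul, Real.norm_of_nonneg hc, mul_assoc]
  gcongr
  refine (norm_fderiv_norm_rpow_le hsub hq).trans ?_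
  rw [fderiv_sub_const, fderiv_fun_id]
  exact mul_le_of_le_one_right (by positivity) ContinuousLinearMap.norm_id_le

theorem norm_gradient_add_le_of_model [CompleteSpace E] {f : E → ℝ} {n : ℕ} {C H θ ν : ℝ}
    (hf : ContDiff ℝ (n + 1 + 1) f) (hC : 0 ≤ C) (hH : 0 ≤ H) (hν : 0 ≤ ν)
    (hHol : ∀ u v, ‖iteratedFDeriv ℝ (n + 1 + 1) f u - iteratedFDeriv ℝ (n + 1 + 1) f v‖ ≤
      C * ‖u - v‖ ^ ν) {x y g : E}
    (hstat : ‖gradient (fun z => taylorPoly f (n + 1 + 1) x z +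
        H / (n + 1 + 1).factorial * ‖z - x‖ ^ ((n + 1 + 1 : ℕ) + ν)) y + g‖ ≤
      θ * ‖y - x‖ ^ ((n + 1 + 1 : ℕ) + ν - 1)) :
    ‖gradient f y + g‖ ≤ (C / (n + 1).factorial + H / (n + 1 + 1).factorial *
      ((n + 1 + 1 : ℕ) + ν) + θ) * ‖y - x‖ ^ ((n + 1 + 1 : ℕ) + ν - 1) := by
  have hq : 1 < ((n + 1 + 1 : ℕ) : ℝ) + ν := by push_cast; linarith
  have hΦ : DifferentiableAt ℝ (taylorPoly f (n + 1 + 1) x) y := by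
    rw [taylorPoly_eq_taylorSum]
    exact (hasFDerivAt_taylorSum hf x y).differentiableAt
  have hR : DifferentiableAt ℝ
      (fun z => H / (n + 1 + 1).factorial * ‖z - x‖ ^ ((n + 1 + 1 : ℕ) + ν)) y :=
    ((differentiable_norm_rpow hq).comp (by fun_prop) y).const_mul _
  refine (norm_gradient_add_le hΦ hR).trans ?_
  rw [add_mul, add_mul]
  gcongr
  · exact norm_fderiv_sub_fderiv_taylorPoly_le hf hC hν hHol x y
  · exact norm_fderiv_mul_norm_sub_rpow_le (by positivity) hq x y

end Gradient

section Numerics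

open Nat

theorem mul_div_rpow_le_of_le_mul_rpow {a b q r D G : ℝ} (ha : 0 ≤ a) (hb : 0 < b) (hq : 1 < q)
    (hr : 0 ≤ r) (hG : 0 ≤ G) (hGr : G ≤ b * r ^ (q - 1)) (hD : a * r ^ q ≤ D) :
    a * (G / b) ^ (q / (q - 1)) ≤ D := by
  have hq1 : 0 < q - 1 := sub_pos.2 hq
  calc a * (G / b) ^ (q / (q - 1)) ≤ a * (r ^ (q - 1)) ^ (q / (q - 1)) := by
        gcongr
        exact (div_le_iff₀' hb).2 hGr
    _ = a * r ^ q := by rw [← Real.rpow_mul hr, mul_div_cancel₀ _ hq1.ne']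
    _ ≤ D := hD

theorem model_gradient_coeff_le {n : ℕ} {C H θ ν : ℝ} (hC : 0 ≤ C) (hν : ν ≤ 1)
    (hCH : ((n + 1 + 1 : ℕ) : ℝ) * C ≤ H) (hθH : 3 * θ * (n + 1)! ≤ H) :
    C / (n + 1)! + H / (n + 1 + 1)! * ((n + 1 + 1 : ℕ) + ν) + θ ≤ 3 * H := by
  have hF : (1 : ℝ) ≤ (n + 1)! := by exact_mod_cast (n + 1).factorial_pos
  have hH : 0 ≤ H := le_trans (by positivity) hCH
  push_cast at hCH ⊢
  rw [factorial_succ (n + 1)]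
  push_cast
  have h1 : C / (n + 1)! ≤ H / 2 := by
    rw [div_le_iff₀ (by linarith)]; nlinarith
  have h2 : H / ((n + 1 + 1) * (n + 1)!) * (n + 1 + 1 + ν) ≤ 3 / 2 * H := by
    have hk : (n + 1 + 1 + ν : ℝ) ≤ 3 / 2 * ((n + 1 + 1) * (n + 1)!) := by
      nlinarith [(by positivity : (0 : ℝ) ≤ n)]
    rw [div_mul_eq_mul_div, div_le_iff₀ (by positivity)]
    nlinarith [mul_le_mul_of_nonneg_left hk hH]
  have h3 : θ ≤ H / 3 := by
    rw [le_div_iff₀ (by norm_num)]; nlinarith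
  linarith

theorem div_factorial_mul_rpow_le {p : ℕ} {C H G q : ℝ} (hp : 2 ≤ p) (hH : 0 < H)
    (hCH : 2 * C ≤ H) (hG : 0 ≤ G) (hq : 2 ≤ q) :
    1 / (8 * ((p + 1)! : ℝ) * H ^ (1 / (q - 1))) * G ^ (q / (q - 1)) ≤
      (H - C) / p ! * (G / (3 * H)) ^ (q / (q - 1)) := by
  have hq1 : 0 < q - 1 := by linarith
  have hexp : q / (q - 1) = 1 / (q - 1) + 1 := by field_simp; ring
  have hthree : (3 : ℝ) ^ (q / (q - 1)) ≤ 9 := calc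
    (3 : ℝ) ^ (q / (q - 1)) ≤ 3 ^ (2 : ℝ) :=
      Real.rpow_le_rpow_of_exponent_le (by norm_num) (by rw [div_le_iff₀ hq1]; linarith)
    _ = 9 := by norm_num
  have hfact : 18 * (p ! : ℝ) ≤ 8 * (p + 1)! := by
    rw [factorial_succ]; push_cast
    have : (2 : ℝ) ≤ p := by exact_mod_cast hp
    nlinarith [(by positivity : (0 : ℝ) < p !)]
  have hhalf : H / (2 * p !) ≤ (H - C) / p ! := by
    rw [← div_div]
    gcongr
    linarith
  refine le_trans ?_ (mul_le_mul_of_nonneg_right hhalf (by positivity))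
  have hrhs : H / (2 * p !) * (G / (3 * H)) ^ (q / (q - 1)) =
      G ^ (q / (q - 1)) / (2 * p ! * 3 ^ (q / (q - 1)) * H ^ (1 / (q - 1))) := by
    rw [Real.div_rpow hG (by positivity), Real.mul_rpow (by norm_num) hH.le, hexp,
      Real.rpow_add hH, Real.rpow_one]
    field_simp
  rw [hrhs, one_div_mul_eq_div]
  apply div_le_div_of_nonneg_left (by positivity) (by positivity)
  gcongr ?_ * _
  nlinarith [(by positivity : (0 : ℝ) < p !)]

end Numerics

theorem composite_descent_lemma_general
    {E : Type*} [NormedAddCommGroup E] [InnerProductSpace ℝ E] [FiniteDimensional ℝ E]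
    (f φ : E → ℝ) (p : ℕ) (hp : 2 ≤ p) (ν Hf H θ : ℝ)
    (hν : ν ∈ Set.Icc (0:ℝ) 1) (hHf : 0 ≤ Hf)
    (hf : ContDiff ℝ p f)
    (hHol : ∀ x y : E, ‖iteratedFDeriv ℝ p f x - iteratedFDeriv ℝ p f y‖ ≤ Hf * ‖x - y‖ ^ ν)
    (hH : max ((p : ℝ) * Hf) (3 * θ * ((p - 1).factorial : ℝ)) ≤ H)
    (x xp gφ : E)
    -- the composite model value at xp does not exceed f̃(x)
    (hmodel : taylorPoly f p x xp + H / (p.factorial : ℝ) * ‖xp - x‖ ^ ((p : ℝ) + ν) + φ xp ≤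
        f x + φ x)
    -- inexact stationarity of the model Ω(y) = Φ_{x,p}(y) + (H/p!)‖y-x‖^{p+ν}
    (happrox : ‖gradient
        (fun y => taylorPoly f p x y + H / (p.factorial : ℝ) * ‖y - x‖ ^ ((p : ℝ) + ν)) xp
        + gφ‖ ≤ θ * ‖xp - x‖ ^ ((p : ℝ) + ν - 1)) :
    (f x + φ x) - (f xp + φ xp) ≥
      1 / (8 * (((p + 1).factorial : ℝ)) * H ^ (1 / ((p : ℝ) + ν - 1)))
        * ‖gradient f xp + gφ‖ ^ (((p : ℝ) + ν) / ((p : ℝ) + ν - 1)) := by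
  obtain ⟨n, rfl⟩ : ∃ n, p = n + 1 + 1 := ⟨p - 2, by omega⟩
  obtain ⟨hν0, hν1⟩ := hν
  have hHfH : ((n + 1 + 1 : ℕ) : ℝ) * Hf ≤ H := (le_max_left _ _).trans hH
  have hθH : 3 * θ * ((n + 1).factorial : ℝ) ≤ H := (le_max_right _ _).trans hH
  have hH0 : 0 ≤ H := le_trans (by positivity) hHfH
  have hHf2 : 2 * Hf ≤ H := by push_cast at hHfH; nlinarith
  have hdescent := sub_div_factorial_mul_rpow_le_of_model_le (by exact_mod_cast hf) hHf hν0
    hHol hmodel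
  have hgrad : ‖gradient f xp + gφ‖ ≤ 3 * H * ‖xp - x‖ ^ ((n + 1 + 1 : ℕ) + ν - 1) :=
    (norm_gradient_add_le_of_model (by exact_mod_cast hf) hHf hH0 hν0 hHol happrox).trans
      (by gcongr; exact model_gradient_coeff_le hHf hν1 hHfH hθH)
  rcases hH0.eq_or_lt with rfl | hHpos
  -- for `H = 0` the right-hand side is `1 / 0 * _ = 0`
  · have hHf0 : Hf = 0 := by linarith
    rw [Real.zero_rpow (by simp; linarith), mul_zero, div_zero, zero_mul]
    simpa [hHf0] using hdescent
  · have hq : (2 : ℝ) ≤ ((n + 1 + 1 : ℕ) : ℝ) + ν := by push_cast; linarith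
    exact (div_factorial_mul_rpow_le (by omega) hHpos hHf2 (norm_nonneg _) hq).trans
      (mul_div_rpow_le_of_le_mul_rpow (div_nonneg (by linarith) (by positivity)) (by positivity)
        (by linarith) (norm_nonneg _) (norm_nonneg _) hgrad hdescent)

theorem composite_descent_lemma
    {E : Type*} [NormedAddCommGroup E] [InnerProductSpace ℝ E] [FiniteDimensional ℝ E]
    (f φ : E → ℝ) (p : ℕ) (hp : 2 ≤ p) (ν Hf H θ : ℝ)
    (hν : ν ∈ Set.Icc (0:ℝ) 1) (hHf : 0 ≤ Hf) (hθ : 0 ≤ θ)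
    (hf : ContDiff ℝ p f) (hconv : ConvexOn ℝ Set.univ f)
    (hHol : ∀ x y : E, ‖iteratedFDeriv ℝ p f x - iteratedFDeriv ℝ p f y‖ ≤ Hf * ‖x - y‖ ^ ν)
    (hφconv : ConvexOn ℝ Set.univ φ) (hφlsc : LowerSemicontinuous φ)
    (hH : max ((p : ℝ) * Hf) (3 * θ * ((p - 1).factorial : ℝ)) ≤ H)
    (x xp gφ : E)
    -- gφ is a subgradient of φ at xp
    (hsub : ∀ y : E, φ xp + ⟪gφ, y - xp⟫ ≤ φ y)
    -- the composite model value at xp does not exceed f̃(x)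
    (hmodel : taylorPoly f p x xp + H / (p.factorial : ℝ) * ‖xp - x‖ ^ ((p : ℝ) + ν) + φ xp ≤
        f x + φ x)
    -- inexact stationarity of the model Ω(y) = Φ_{x,p}(y) + (H/p!)‖y-x‖^{p+ν}
    (happrox : ‖gradient
        (fun y => taylorPoly f p x y + H / (p.factorial : ℝ) * ‖y - x‖ ^ ((p : ℝ) + ν)) xp
        + gφ‖ ≤ θ * ‖xp - x‖ ^ ((p : ℝ) + ν - 1)) :
    (f x + φ x) - (f xp + φ xp) ≥
      1 / (8 * (((p + 1).factorial : ℝ)) * H ^ (1 / ((p : ℝ) + ν - 1)))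
        * ‖gradient f xp + gφ‖ ^ (((p : ℝ) + ν) / ((p : ℝ) + ν - 1)) :=
  composite_descent_lemma_general f φ p hp ν Hf H θ hν hHf hf hHol hH x xp gφ hmodel happrox
end

section
/- For integers 2 ≤ k ≤ n and real p ≥ 2, ν ∈ [0,1], consider the convex function f_k : ℝⁿ → ℝ given by f_k(x) = (1/(p+ν))·[Σ_{i=1}^{k−1} |x^{(i)}−x^{(i+1)}|^{p+ν} + Σ_{i=k}^{n} |x^{(i)}|^{p+ν}] − x^{(1)}. Then f_k has a unique global minimizer x_k*, its optimal value is f_k* = −(p+ν−1)k/(p+ν), and ‖x_k*‖ < (k+1)^{3/2}/√3. -/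
/-- The `i`-th coordinate of `x` in 1-based indexing (0 outside the range `1..n`). -/
noncomputable def coord {n : ℕ} (x : EuclideanSpace ℝ (Fin n)) (i : ℕ) : ℝ :=
  if h : 1 ≤ i ∧ i ≤ n then x ⟨i - 1, by omega⟩ else 0

/-- The difficult function `f_k` from the lower-bound construction, with exponent `pν = p + ν`. -/
noncomputable def hardFun (n k : ℕ) (pν : ℝ) (x : EuclideanSpace ℝ (Fin n)) : ℝ :=
  (1 / pν) * ((∑ i ∈ Finset.Ico 1 k, |coord x i - coord x (i + 1)| ^ pν)
    + ∑ i ∈ Finset.Icc k n, |coord x i| ^ pν) - coord x 1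

/-!
Each term `|t|^q / q` of `f_k` with `t = x⁽ⁱ⁾ - x⁽ⁱ⁺¹⁾` (`i < k`) or `t = x⁽ᵏ⁾` lies above its
tangent line `1/q + (t - 1)` at `t = 1`, strictly unless `t = 1`. The linear parts of these
`k` tangent lines telescope to `x⁽¹⁾`, which cancels the linear term of `f_k`, so
`f_k = k/q - k + (nonnegative gaps)`. All gaps vanish exactly at
`x* = (k, k-1, …, 1, 0, …, 0)`, whose squared norm is `∑_{j ≤ k} j² < (k+1)³/3`.
-/

open Finset

section TangentGap

variable {q t : ℝ}

lemma tangent_le_abs_rpow (hq : 1 ≤ q) (t : ℝ) : 1 + q * (t - 1) ≤ |t| ^ q := by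
  rcases le_or_gt 0 t with ht | ht
  · rw [abs_of_nonneg ht]
    simpa using one_add_mul_self_le_rpow_one_add (s := t - 1) (by linarith) hq
  · nlinarith [Real.rpow_nonneg (abs_nonneg t) q]

lemma tangent_lt_abs_rpow (hq : 1 < q) (ht : t ≠ 1) : 1 + q * (t - 1) < |t| ^ q := by
  rcases le_or_gt 0 t with ht0 | ht0
  · rw [abs_of_nonneg ht0]
    simpa using one_add_mul_self_lt_rpow_one_add (s := t - 1) (by linarith)
      (sub_ne_zero.mpr ht) hq
  · nlinarith [Real.rpow_nonneg (abs_nonneg t) q]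

noncomputable def tangentGap (q t : ℝ) : ℝ :=
  |t| ^ q / q - (1 / q + (t - 1))

lemma tangentGap_eq (hq : q ≠ 0) : tangentGap q t = (|t| ^ q - (1 + q * (t - 1))) / q := by
  rw [tangentGap]
  field_simp

lemma tangentGap_nonneg (hq : 1 ≤ q) (t : ℝ) : 0 ≤ tangentGap q t := by
  rw [tangentGap_eq (by positivity)]
  exact div_nonneg (sub_nonneg.mpr (tangent_le_abs_rpow hq t)) (by positivity)

lemma eq_one_of_tangentGap_eq_zero (hq : 1 < q) (h : tangentGap q t = 0) : t = 1 := by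
  by_contra ht
  rw [tangentGap_eq (by positivity)] at h
  have := div_pos (sub_pos.mpr (tangent_lt_abs_rpow hq ht)) (by linarith : 0 < q)
  linarith

lemma tangentGap_one (q : ℝ) : tangentGap q 1 = 0 := by
  simp [tangentGap]

end TangentGap

lemma sum_Ico_sub_succ (g : ℕ → ℝ) {m n : ℕ} (h : m ≤ n) :
    ∑ i ∈ Ico m n, (g i - g (i + 1)) = g m - g n := by
  have := sum_Ico_sub (fun i => -g i) h
  simp only [sub_neg_eq_add, neg_add_eq_sub] at this
  linarith

section HardFun

variable {n k : ℕ} {q : ℝ}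

noncomputable def hardGap (n k : ℕ) (q : ℝ) (y : EuclideanSpace ℝ (Fin n)) : ℝ :=
  ∑ i ∈ Ico 1 k, tangentGap q (coord y i - coord y (i + 1)) + tangentGap q (coord y k)
    + ∑ i ∈ Icc (k + 1) n, |coord y i| ^ q / q

lemma hardFun_eq_add_hardGap (hk : 1 ≤ k) (hkn : k ≤ n) (hq : q ≠ 0)
    (y : EuclideanSpace ℝ (Fin n)) :
    hardFun n k q y = k / q - k + hardGap n k q y := by
  have hsplit : Icc k n = insert k (Icc (k + 1) n) := by
    ext i; simp only [mem_Icc, mem_insert]; omega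
  have htele := sum_Ico_sub_succ (coord y) hk
  simp only [hardFun, hardGap, hsplit, sum_insert (by simp : k ∉ Icc (k + 1) n), tangentGap,
    sum_sub_distrib, sum_add_distrib, ← sum_div, sum_const, Nat.card_Ico, nsmul_eq_mul,
    Nat.cast_sub hk, htele]
  field_simp
  ring

lemma hardGap_nonneg (hq : 1 ≤ q) (y : EuclideanSpace ℝ (Fin n)) : 0 ≤ hardGap n k q y :=
  add_nonneg (add_nonneg (sum_nonneg fun _ _ => tangentGap_nonneg hq _) (tangentGap_nonneg hq _))
    (sum_nonneg fun _ _ => div_nonneg (Real.rpow_nonneg (abs_nonneg _) q) (by linarith))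

/-- Truncated subtraction makes the coordinates `k, k - 1, …, 1, 0, …, 0`. -/
noncomputable def hardMin (n k : ℕ) : EuclideanSpace ℝ (Fin n) :=
  WithLp.toLp 2 fun j => ((k - j : ℕ) : ℝ)

lemma coord_hardMin {i : ℕ} (h1 : 1 ≤ i) (h2 : i ≤ n) :
    coord (hardMin n k) i = ((k + 1 - i : ℕ) : ℝ) := by
  simp only [coord, dif_pos (And.intro h1 h2), hardMin]
  congr 1
  omega

lemma ext_coord {x y : EuclideanSpace ℝ (Fin n)}
    (h : ∀ i, 1 ≤ i → i ≤ n → coord x i = coord y i) : x = y := by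
  ext j
  have := h (j + 1) (by omega) (by omega)
  simpa [coord] using this

lemma hardGap_hardMin (hk : 1 ≤ k) (hkn : k ≤ n) (hq : q ≠ 0) :
    hardGap n k q (hardMin n k) = 0 := by
  have hdiff : ∀ i ∈ Ico 1 k,
      tangentGap q (coord (hardMin n k) i - coord (hardMin n k) (i + 1)) = 0 := by
    intro i hi
    rw [mem_Ico] at hi
    rw [coord_hardMin hi.1 (by omega), coord_hardMin (by omega) (by omega),
      show k + 1 - i = (k + 1 - (i + 1)) + 1 by omega, Nat.cast_succ, add_sub_cancel_left,
      tangentGap_one]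
  have htail : ∀ i ∈ Icc (k + 1) n, |coord (hardMin n k) i| ^ q / q = 0 := by
    intro i hi
    rw [mem_Icc] at hi
    rw [coord_hardMin (by omega) hi.2, Nat.sub_eq_zero_of_le hi.1]
    simp [Real.zero_rpow hq]
  rw [hardGap, sum_eq_zero hdiff, sum_eq_zero htail, coord_hardMin hk hkn, Nat.add_sub_cancel_left,
    Nat.cast_one, tangentGap_one]
  simp

lemma eq_hardMin_of_hardGap_eq_zero (hq : 1 < q) {y : EuclideanSpace ℝ (Fin n)}
    (h : hardGap n k q y = 0) : y = hardMin n k := by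
  have hq0 : 0 < q := by linarith
  have hdiff_nonneg : ∀ i ∈ Ico 1 k, 0 ≤ tangentGap q (coord y i - coord y (i + 1)) :=
    fun i _ => tangentGap_nonneg hq.le _
  have htail_nonneg : ∀ i ∈ Icc (k + 1) n, 0 ≤ |coord y i| ^ q / q :=
    fun i _ => div_nonneg (Real.rpow_nonneg (abs_nonneg _) q) hq0.le
  have hdiff_sum := sum_nonneg hdiff_nonneg
  have htail_sum := sum_nonneg htail_nonneg
  have hlast_nonneg := tangentGap_nonneg hq.le (coord y k)
  rw [hardGap] at h
  have hdiff : ∀ i ∈ Ico 1 k, coord y i - coord y (i + 1) = 1 := fun i hi =>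
    eq_one_of_tangentGap_eq_zero hq ((sum_eq_zero_iff_of_nonneg hdiff_nonneg).mp (by linarith) i hi)
  have hlast : coord y k = 1 := eq_one_of_tangentGap_eq_zero hq (by linarith)
  have htail : ∀ i ∈ Icc (k + 1) n, coord y i = 0 := fun i hi => by
    have := (sum_eq_zero_iff_of_nonneg htail_nonneg).mp (by linarith) i hi
    simpa [hq0.ne', Real.rpow_eq_zero_iff_of_nonneg] using this
  refine ext_coord fun i h1 h2 => ?_
  rw [coord_hardMin h1 h2]
  rcases le_or_gt i k with hik | hik
  · have htele := sum_Ico_sub_succ (coord y) hik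
    rw [sum_congr rfl fun j hj => hdiff j (by simp only [mem_Ico] at hj ⊢; omega), hlast] at htele
    simp only [sum_const, Nat.card_Ico, nsmul_eq_mul, mul_one] at htele
    rw [Nat.cast_sub hik] at htele
    rw [Nat.cast_sub (by omega)]
    push_cast
    linarith
  · rw [htail i (mem_Icc.mpr ⟨hik, h2⟩), Nat.sub_eq_zero_of_le hik, Nat.cast_zero]

lemma norm_hardMin_sq (hkn : k ≤ n) :
    ‖hardMin n k‖ ^ 2 = ((∑ j ∈ range k, (k - j) ^ 2 : ℕ) : ℝ) := by
  rw [EuclideanSpace.real_norm_sq_eq, Nat.cast_sum]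
  refine (Fin.sum_univ_eq_sum_range (fun j => ((k - j : ℕ) : ℝ) ^ 2) n).trans
    (sum_subset (range_subset_range.mpr hkn) fun j _ hj => ?_).symm |>.trans ?_
  · rw [mem_range, not_lt] at hj
    simp [Nat.sub_eq_zero_of_le hj]
  · push_cast
    rfl

end HardFun

lemma three_mul_sum_range_sub_sq_lt (k : ℕ) : 3 * ∑ j ∈ range k, (k - j) ^ 2 < (k + 1) ^ 3 := by
  induction k with
  | zero => norm_num
  | succ m ih =>
    rw [sum_range_succ']
    simp only [Nat.add_sub_add_right, Nat.sub_zero]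
    have hexpand : (m + 1 + 1) ^ 3 = (m + 1) ^ 3 + 3 * (m + 1) ^ 2 + 3 * (m + 1) + 1 := by ring
    rw [hexpand]
    linarith

lemma norm_hardMin_lt {n k : ℕ} (hkn : k ≤ n) :
    ‖hardMin n k‖ < ((k : ℝ) + 1) ^ ((3 : ℝ) / 2) / Real.sqrt 3 := by
  have hbound : ((k : ℝ) + 1) ^ ((3 : ℝ) / 2) / Real.sqrt 3 =
      Real.sqrt (((k : ℝ) + 1) ^ 3 / 3) := by
    rw [Real.sqrt_div' _ (by norm_num), Real.sqrt_eq_rpow ((_ : ℝ) ^ 3),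
      ← Real.rpow_natCast _ 3, ← Real.rpow_mul (by positivity)]
    norm_num
  rw [hbound, ← Real.sqrt_sq (norm_nonneg _), norm_hardMin_sq hkn]
  refine Real.sqrt_lt_sqrt (by positivity) ?_
  rw [lt_div_iff₀ (by norm_num), mul_comm]
  exact_mod_cast three_mul_sum_range_sub_sq_lt k

theorem hardFun_min
    (n k : ℕ) (hk : 2 ≤ k) (hkn : k ≤ n) (p ν : ℝ) (hp : 2 ≤ p) (hν : ν ∈ Set.Icc (0:ℝ) 1) :
    ∃ xstar : EuclideanSpace ℝ (Fin n),
      (∀ y, hardFun n k (p + ν) xstar ≤ hardFun n k (p + ν) y) ∧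
      (∀ z, (∀ y, hardFun n k (p + ν) z ≤ hardFun n k (p + ν) y) → z = xstar) ∧
      hardFun n k (p + ν) xstar = -((p + ν - 1) * k) / (p + ν) ∧
      ‖xstar‖ < ((k : ℝ) + 1) ^ ((3 : ℝ) / 2) / Real.sqrt 3 := by
  have hq : 1 < p + ν := by linarith [hν.1]
  have hq0 : p + ν ≠ 0 := (zero_lt_one.trans hq).ne'
  have hk1 : 1 ≤ k := by omega
  have hdecomp := hardFun_eq_add_hardGap hk1 hkn hq0
  have hmin := hardGap_hardMin hk1 hkn hq0
  refine ⟨hardMin n k, fun y => ?_, fun z hz => ?_, ?_, norm_hardMin_lt hkn⟩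
  · rw [hdecomp, hdecomp, hmin]
    linarith [hardGap_nonneg hq.le (k := k) y]
  · refine eq_hardMin_of_hardGap_eq_zero hq (le_antisymm ?_ (hardGap_nonneg hq.le z))
    have := hz (hardMin n k)
    rw [hdecomp, hdecomp, hmin] at this
    linarith
  · rw [hdecomp, hmin]
    field_simp
    ring
end

section
/- Let f : E → ℝ be ν-Hölder p-th order smooth with constant H (‖∇f(y) − ∇Φ_{x,p}(y)‖ ≤ (H/(p−1)!)‖y−x‖^{p+ν−1}) and suppose x⁺ satisfies ‖∇Ω(x⁺)‖ ≤ θ‖x⁺−x‖^{p+ν−1} for the model Ω(y) = Φ_{x,p}(y) + (M/p!)‖y−x‖^{p+ν} with M ≥ (p+ν−1)(H + θ(p−1)!). Let r = ‖x⁺−x‖. Then ‖∇f(x⁺) + (M(p+ν)/p!)·r^{p+ν−2}·(x⁺−x)‖ ≤ (H/(p−1)! + θ)·r^{p+ν−1}, and consequently ‖∇f(x⁺)‖² + (2(p+ν)M/p!)·r^{p+ν−2}·⟨∇f(x⁺), x⁺−x⟩ + (M²(p+ν)²/(p!)²)·r^{2(p+ν−1)} ≤ (H/(p−1)! + θ)²·r^{2(p+ν−1)}.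 -/
open RealInnerProductSpace

theorem model_stationarity_gradient_estimate
    {E : Type*} [NormedAddCommGroup E] [InnerProductSpace ℝ E] [FiniteDimensional ℝ E]
    (f : E → ℝ) (p : ℕ) (hp : 2 ≤ p) (ν H M θ : ℝ)
    (hν : ν ∈ Set.Icc (0:ℝ) 1) (hH : 0 ≤ H) (hθ : 0 ≤ θ)
    (hM : ((p : ℝ) + ν - 1) * (H + θ * ((p - 1).factorial : ℝ)) ≤ M)
    -- ν-Hölder p-th order smoothness: gradient of the Taylor residual
    (hHol : ∀ x y : E, ‖gradient f y - gradient (fun z => taylorPoly f p x z) y‖ ≤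
      H / ((p - 1).factorial : ℝ) * ‖y - x‖ ^ ((p : ℝ) + ν - 1))
    (x xp : E)
    -- inexact stationarity of the model: ∇Ω(x⁺) = ∇Φ_{x,p}(x⁺) + (M(p+ν)/p!)r^{p+ν-2}(x⁺-x)
    (hstat : ‖gradient (fun z => taylorPoly f p x z) xp
        + (M * ((p : ℝ) + ν) / (p.factorial : ℝ) * ‖xp - x‖ ^ ((p : ℝ) + ν - 2)) • (xp - x)‖
        ≤ θ * ‖xp - x‖ ^ ((p : ℝ) + ν - 1)) :
    ‖gradient f xp
        + (M * ((p : ℝ) + ν) / (p.factorial : ℝ) * ‖xp - x‖ ^ ((p : ℝ) + ν - 2)) • (xp - x)‖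
      ≤ (H / ((p - 1).factorial : ℝ) + θ) * ‖xp - x‖ ^ ((p : ℝ) + ν - 1) ∧
    ‖gradient f xp‖ ^ 2
        + (2 * ((p : ℝ) + ν) * M / (p.factorial : ℝ)) * ‖xp - x‖ ^ ((p : ℝ) + ν - 2)
          * ⟪gradient f xp, xp - x⟫
        + (M ^ 2 * ((p : ℝ) + ν) ^ 2 / ((p.factorial : ℝ)) ^ 2)
          * ‖xp - x‖ ^ (2 * ((p : ℝ) + ν - 1))
      ≤ (H / ((p - 1).factorial : ℝ) + θ) ^ 2 * ‖xp - x‖ ^ (2 * ((p : ℝ) + ν - 1)) := by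
  obtain ⟨hν0, hν1⟩ := hν
  set r := ‖xp - x‖ with hr
  have hr0 : 0 ≤ r := norm_nonneg _
  set c : ℝ := M * ((p : ℝ) + ν) / (p.factorial : ℝ) * r ^ ((p : ℝ) + ν - 2) with hc
  set a := gradient f xp with ha
  set g := gradient (fun z => taylorPoly f p x z) xp with hg
  have hpν1 : (0:ℝ) < (p : ℝ) + ν - 1 := by
    have : (2:ℝ) ≤ (p:ℝ) := by exact_mod_cast hp
    linarith
  -- first inequality
  have key : a + c • (xp - x) = (a - g) + (g + c • (xp - x)) := by abel
  have h1 : ‖a + c • (xp - x)‖ ≤ (H / ((p - 1).factorial : ℝ) + θ) * r ^ ((p : ℝ) + ν - 1) := by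
    rw [key]
    calc ‖(a - g) + (g + c • (xp - x))‖ ≤ ‖a - g‖ + ‖g + c • (xp - x)‖ := norm_add_le _ _
      _ ≤ H / ((p - 1).factorial : ℝ) * r ^ ((p : ℝ) + ν - 1)
          + θ * r ^ ((p : ℝ) + ν - 1) := add_le_add (hHol x xp) hstat
      _ = (H / ((p - 1).factorial : ℝ) + θ) * r ^ ((p : ℝ) + ν - 1) := by ring
  refine ⟨h1, ?_⟩
  -- second inequality
  have hsq : ‖a + c • (xp - x)‖ ^ 2
      ≤ ((H / ((p - 1).factorial : ℝ) + θ) * r ^ ((p : ℝ) + ν - 1)) ^ 2 :=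
    pow_le_pow_left₀ (norm_nonneg _) h1 2
  have hexp : (r ^ ((p : ℝ) + ν - 1)) ^ 2 = r ^ (2 * ((p : ℝ) + ν - 1)) := by
    rw [← Real.rpow_natCast (r ^ ((p : ℝ) + ν - 1)) 2, ← Real.rpow_mul hr0]
    norm_num [mul_comm]
  have hexpand : ‖a + c • (xp - x)‖ ^ 2
      = ‖a‖ ^ 2 + 2 * (c * ⟪a, xp - x⟫) + c ^ 2 * r ^ 2 := by
    have hb : ‖c • (xp - x)‖ ^ 2 = c ^ 2 * r ^ 2 := by
      rw [norm_smul, mul_pow, Real.norm_eq_abs, sq_abs]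
    rw [norm_add_sq_real, real_inner_smul_right, hb]
  have hc2 : c ^ 2 * r ^ 2 = (M ^ 2 * ((p : ℝ) + ν) ^ 2 / ((p.factorial : ℝ)) ^ 2)
      * r ^ (2 * ((p : ℝ) + ν - 1)) := by
    rcases eq_or_lt_of_le hr0 with h0 | hpos
    · have hr0' : r = 0 := h0.symm
      rw [hr0', Real.zero_rpow (by linarith : 2 * ((p : ℝ) + ν - 1) ≠ 0)]
      ring
    · have : r ^ ((p : ℝ) + ν - 2) * r = r ^ ((p : ℝ) + ν - 1) := by
        rw [← Real.rpow_add_one (ne_of_gt hpos)]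
        ring_nf
      calc c ^ 2 * r ^ 2 = (M * ((p : ℝ) + ν) / (p.factorial : ℝ)) ^ 2
            * (r ^ ((p : ℝ) + ν - 2) * r) ^ 2 := by rw [hc]; ring
        _ = (M ^ 2 * ((p : ℝ) + ν) ^ 2 / ((p.factorial : ℝ)) ^ 2)
            * r ^ (2 * ((p : ℝ) + ν - 1)) := by rw [this, hexp]; ring
  calc ‖a‖ ^ 2 + (2 * ((p : ℝ) + ν) * M / (p.factorial : ℝ)) * r ^ ((p : ℝ) + ν - 2)
          * ⟪a, xp - x⟫
        + (M ^ 2 * ((p : ℝ) + ν) ^ 2 / ((p.factorial : ℝ)) ^ 2)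
          * r ^ (2 * ((p : ℝ) + ν - 1))
      = ‖a‖ ^ 2 + 2 * (c * ⟪a, xp - x⟫) + c ^ 2 * r ^ 2 := by rw [hc2, hc]; ring
    _ = ‖a + c • (xp - x)‖ ^ 2 := hexpand.symm
    _ ≤ ((H / ((p - 1).factorial : ℝ) + θ) * r ^ ((p : ℝ) + ν - 1)) ^ 2 := hsq
    _ = (H / ((p - 1).factorial : ℝ) + θ) ^ 2 * r ^ (2 * ((p : ℝ) + ν - 1)) := by
        rw [mul_pow, hexp]
end
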